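/- Work in the lattice ℤ² and let p be a positively oriented plaquette. There are exactly five connected plaquette assignments K with area(K) = 3 such that the pair (p,K) is balanced, namely: the assignment K₀ defined by K₀(p) = 1, K₀(p^{-1}) = 2 and K₀(q) = 0 for all other plaquettes q; and, for each of the four positively oriented plaquettes p₁, p₂, p₃, p₄ of ℤ² sharing an (unoriented) edge with p, the assignment Kᵢ defined by Kᵢ(p^{-1}) = Kᵢ(pᵢ) = Kᵢ(pᵢ^{-1}) = 1 and Kᵢ(q) = 0 for all other plaquettes q. -/

import Mathlib

open scoped BigOperators Classical
noncomputable section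

/-- A vertex of the lattice `ℤ^d`. -/
abbrev Vtx (d : ℕ) := Fin d → ℤ

/-- An oriented edge of `ℤ^d`, as an ordered pair of vertices. -/
abbrev Edge (d : ℕ) := Vtx d × Vtx d

/-- The reversal `e⁻¹` of an oriented edge. -/
def erev {d : ℕ} (e : Edge d) : Edge d := (e.2, e.1)

/-- `e` is a nearest-neighbour lattice edge: its endpoints differ by `±` a standard
basis vector. -/
def IsLatticeEdge {d : ℕ} (e : Edge d) : Prop :=
  ∃ i : Fin d, e.2 = e.1 + Pi.single i 1 ∨ e.1 = e.2 + Pi.single i 1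

/-- `e` is positively oriented: its endpoint is lexicographically larger than its start. -/
def IsPosEdge {d : ℕ} (e : Edge d) : Prop :=
  ∃ i : Fin d, e.1 i < e.2 i ∧ ∀ j : Fin d, j < i → e.1 j = e.2 j

/-- A loop: a finite cyclic sequence of lattice edges, each edge ending where the next
one starts (and the last ending where the first starts).  The empty list is the null loop. -/
def IsLoop {d : ℕ} (l : List (Edge d)) : Prop :=
  (∀ e ∈ l, IsLatticeEdge e) ∧ List.Chain' (fun e f => e.2 = f.1) l ∧
    ∀ e ∈ l.head?, ∀ f ∈ l.getLast?, f.2 = e.1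

/-- A string: a finite multiset of non-null loops. -/
def IsStringM {d : ℕ} (s : Multiset (List (Edge d))) : Prop :=
  ∀ l ∈ s, l ≠ [] ∧ IsLoop l

/-- The total length `|s|` of a string. -/
def strLenM {d : ℕ} (s : Multiset (List (Edge d))) : ℕ :=
  (s.map List.length).sum

/-- An oriented plaquette of `ℤ^d`: a base corner `x` together with an ordered pair of
distinct directions; its boundary loop is `x → x+e_i → x+e_i+e_j → x+e_j → x`. -/
structure Plaq (d : ℕ) where
  corner : Vtx d
  dir1 : Fin d
  dir2 : Fin d
  hdir : dir1 ≠ dir2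

/-- The reversal `p⁻¹` of an oriented plaquette. -/
def Plaq.rev {d : ℕ} (P : Plaq d) : Plaq d := ⟨P.corner, P.dir2, P.dir1, P.hdir.symm⟩

/-- The four oriented boundary edges of a plaquette, as a loop. -/
def Plaq.edges {d : ℕ} (P : Plaq d) : List (Edge d) :=
  [(P.corner, P.corner + Pi.single P.dir1 1),
   (P.corner + Pi.single P.dir1 1, P.corner + Pi.single P.dir1 1 + Pi.single P.dir2 1),
   (P.corner + Pi.single P.dir1 1 + Pi.single P.dir2 1, P.corner + Pi.single P.dir2 1),
   (P.corner + Pi.single P.dir2 1, P.corner)]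

/-- A plaquette is positively oriented when the edge connecting its two lexicographically
smallest vertices is positively oriented; in this encoding this says `dir2 < dir1`. -/
def Plaq.posOriented {d : ℕ} (P : Plaq d) : Prop := P.dir2 < P.dir1

/-- The area of a plaquette assignment `K : 𝒫 → ℕ`. -/
def parea {d : ℕ} (K : Plaq d → ℕ) : ℕ := ∑ᶠ p, K p

/-- Two plaquettes share an (unoriented) edge. -/
def SharesEdge {d : ℕ} (P Q : Plaq d) : Prop :=
  ∃ e ∈ P.edges, e ∈ Q.edges ∨ erev e ∈ Q.edges

/-- The support of a plaquette assignment: the positively oriented plaquettes `q` with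
`K q ≠ 0` or `K q⁻¹ ≠ 0`. -/
def psupp {d : ℕ} (K : Plaq d → ℕ) : Set (Plaq d) :=
  {q | q.posOriented ∧ (K q ≠ 0 ∨ K q.rev ≠ 0)}

/-- A plaquette assignment is connected if any two plaquettes of its support are joined by
a chain of plaquettes of the support in which consecutive plaquettes share an edge. -/
def PAConnected {d : ℕ} (K : Plaq d → ℕ) : Prop :=
  ∀ p ∈ psupp K, ∀ q ∈ psupp K,
    Relation.ReflTransGen (fun a b => a ∈ psupp K ∧ b ∈ psupp K ∧ SharesEdge a b) p q

/-- `n_e(l, K)`: the number of occurrences of the oriented edge `e` in the loop `l`, plus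
the total `K`-multiplicity of plaquettes containing `e` (with the correct orientation). -/
def nEdge {d : ℕ} (l : List (Edge d)) (K : Plaq d → ℕ) (e : Edge d) : ℕ :=
  (l.filter fun x => x = e).length + ∑ᶠ p ∈ {p : Plaq d | e ∈ p.edges}, K p

/-- The pair `(l, K)` is balanced (pair): `n_e(l,K) = n_{e⁻¹}(l,K)` for every oriented edge `e`. -/
def BalancedPair {d : ℕ} (l : List (Edge d)) (K : Plaq d → ℕ) : Prop :=
  ∀ e : Edge d, nEdge l K e = nEdge l K (erev e)

set_option linter.unusedVariables false

namespace Stmt13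

notation "E0" => (Pi.single (0 : Fin 2) (1:ℤ) : Vtx 2)
notation "E1" => (Pi.single (1 : Fin 2) (1:ℤ) : Vtx 2)

@[simp] lemma e00 : E0 0 = 1 := rfl
@[simp] lemma e01 : E0 1 = 0 := rfl
@[simp] lemma e10 : E1 0 = 0 := rfl
@[simp] lemma e11 : E1 1 = 1 := rfl

lemma vec_ext {u v : Vtx 2} : u = v ↔ u 0 = v 0 ∧ u 1 = v 1 := by
  constructor
  · rintro rfl; exact ⟨rfl, rfl⟩
  · rintro ⟨h0, h1⟩; funext i; fin_cases i <;> assumption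

/-- positively oriented plaquette at corner x -/
def Pp (x : Vtx 2) : Plaq 2 := ⟨x, 1, 0, by decide⟩
/-- negatively oriented plaquette at corner x -/
def Pn (x : Vtx 2) : Plaq 2 := ⟨x, 0, 1, by decide⟩

lemma plaq_eq_iff (P Q : Plaq 2) : P = Q ↔ P.corner = Q.corner ∧ P.dir1 = Q.dir1 ∧ P.dir2 = Q.dir2 := by
  constructor
  · rintro rfl; exact ⟨rfl, rfl, rfl⟩
  · obtain ⟨c,a,b,h⟩ := P; obtain ⟨c',a',b',h'⟩ := Q
    rintro ⟨rfl, rfl, rfl⟩; rfl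

lemma plaq_cases (q : Plaq 2) : q = Pp q.corner ∨ q = Pn q.corner := by
  obtain ⟨c, a, b, h⟩ := q
  fin_cases a <;> fin_cases b <;> simp_all [Pp, Pn, plaq_eq_iff] <;> exact absurd rfl h

@[simp] lemma Pp_inj {x y : Vtx 2} : Pp x = Pp y ↔ x = y := by simp [Pp, plaq_eq_iff]
@[simp] lemma Pn_inj {x y : Vtx 2} : Pn x = Pn y ↔ x = y := by simp [Pn, plaq_eq_iff]
@[simp] lemma Pp_ne_Pn {x y : Vtx 2} : Pp x ≠ Pn y := by simp [Pp, Pn, plaq_eq_iff]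
@[simp] lemma Pn_ne_Pp {x y : Vtx 2} : Pn x ≠ Pp y := by simp [Pp, Pn, plaq_eq_iff]
@[simp] lemma Pp_rev (x : Vtx 2) : (Pp x).rev = Pn x := rfl
@[simp] lemma Pn_rev (x : Vtx 2) : (Pn x).rev = Pp x := rfl
@[simp] lemma Pp_pos (x : Vtx 2) : (Pp x).posOriented := by simp [Pp, Plaq.posOriented]
@[simp] lemma Pn_not_pos (x : Vtx 2) : ¬ (Pn x).posOriented := by simp [Pn, Plaq.posOriented]

lemma pos_eq_Pp {q : Plaq 2} (h : q.posOriented) : q = Pp q.corner := by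
  rcases plaq_cases q with h' | h'
  · exact h'
  · rw [h'] at h; exact absurd h (Pn_not_pos _)

end Stmt13

namespace Stmt13

lemma mem_edges_E1 (q : Plaq 2) (u : Vtx 2) :
    (u, u + E1) ∈ q.edges ↔ q = Pp u ∨ q = Pn (u - E0) := by
  rcases plaq_cases q with h | h <;> rw [h] <;>
    simp [Plaq.edges, Pp, Pn, plaq_eq_iff, Prod.ext_iff, vec_ext, Pi.add_apply,
      Pi.sub_apply] <;> omega

lemma mem_edges_E1' (q : Plaq 2) (u : Vtx 2) :
    (u + E1, u) ∈ q.edges ↔ q = Pn u ∨ q = Pp (u - E0) := by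
  rcases plaq_cases q with h | h <;> rw [h] <;>
    simp [Plaq.edges, Pp, Pn, plaq_eq_iff, Prod.ext_iff, vec_ext, Pi.add_apply,
      Pi.sub_apply] <;> omega

lemma mem_edges_E0 (q : Plaq 2) (u : Vtx 2) :
    (u, u + E0) ∈ q.edges ↔ q = Pn u ∨ q = Pp (u - E1) := by
  rcases plaq_cases q with h | h <;> rw [h] <;>
    simp [Plaq.edges, Pp, Pn, plaq_eq_iff, Prod.ext_iff, vec_ext, Pi.add_apply,
      Pi.sub_apply] <;> omega

lemma mem_edges_E0' (q : Plaq 2) (u : Vtx 2) :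
    (u + E0, u) ∈ q.edges ↔ q = Pp u ∨ q = Pn (u - E1) := by
  rcases plaq_cases q with h | h <;> rw [h] <;>
    simp [Plaq.edges, Pp, Pn, plaq_eq_iff, Prod.ext_iff, vec_ext, Pi.add_apply,
      Pi.sub_apply] <;> omega

lemma mem_edges_lattice {q : Plaq 2} {e : Edge 2} (h : e ∈ q.edges) :
    e.2 = e.1 + E0 ∨ e.2 = e.1 + E1 ∨ e.1 = e.2 + E0 ∨ e.1 = e.2 + E1 := by
  rcases plaq_cases q with h' | h' <;> rw [h'] at h <;>
    simp [Plaq.edges, Pp, Pn, Prod.ext_iff] at h <;>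
    rcases h with ⟨h1, h2⟩ | ⟨h1, h2⟩ | ⟨h1, h2⟩ | ⟨h1, h2⟩ <;>
    simp only [vec_ext, Pi.add_apply, e00, e01, e10, e11] at h1 h2 ⊢ <;> omega

end Stmt13

namespace Stmt13

lemma count1 (c u : Vtx 2) :
    (((Pp c).edges).filter fun x => x = ((u, u + E1) : Edge 2)).length
      = if u = c then 1 else 0 := by
  simp only [Plaq.edges, Pp, List.filter_cons, List.filter_nil, decide_eq_true_eq]
  split_ifs <;> simp_all [Prod.ext_iff, vec_ext, Pi.add_apply] <;> omega

lemma count2 (c u : Vtx 2) :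
    (((Pp c).edges).filter fun x => x = ((u + E1, u) : Edge 2)).length
      = if u = c + E0 then 1 else 0 := by
  simp only [Plaq.edges, Pp, List.filter_cons, List.filter_nil, decide_eq_true_eq]
  split_ifs <;> simp_all [Prod.ext_iff, vec_ext, Pi.add_apply] <;> omega

lemma count3 (c u : Vtx 2) :
    (((Pp c).edges).filter fun x => x = ((u, u + E0) : Edge 2)).length
      = if u = c + E1 then 1 else 0 := by
  simp only [Plaq.edges, Pp, List.filter_cons, List.filter_nil, decide_eq_true_eq]
  split_ifs <;> simp_all [Prod.ext_iff, vec_ext, Pi.add_apply] <;> omega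

lemma count4 (c u : Vtx 2) :
    (((Pp c).edges).filter fun x => x = ((u + E0, u) : Edge 2)).length
      = if u = c then 1 else 0 := by
  simp only [Plaq.edges, Pp, List.filter_cons, List.filter_nil, decide_eq_true_eq]
  split_ifs <;> simp_all [Prod.ext_iff, vec_ext, Pi.add_apply] <;> omega

lemma nE1 (c u : Vtx 2) (K : Plaq 2 → ℕ) :
    nEdge (Pp c).edges K (u, u + E1)
      = (if u = c then 1 else 0) + (K (Pp u) + K (Pn (u - E0))) := by
  have hset : {q : Plaq 2 | (u, u + E1) ∈ q.edges} = {Pp u, Pn (u - E0)} := by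
    ext q; simp [mem_edges_E1]
  rw [nEdge, count1, hset, finsum_mem_pair (by simp)]

lemma nE1' (c u : Vtx 2) (K : Plaq 2 → ℕ) :
    nEdge (Pp c).edges K (u + E1, u)
      = (if u = c + E0 then 1 else 0) + (K (Pn u) + K (Pp (u - E0))) := by
  have hset : {q : Plaq 2 | (u + E1, u) ∈ q.edges} = {Pn u, Pp (u - E0)} := by
    ext q; simp [mem_edges_E1']
  rw [nEdge, count2, hset, finsum_mem_pair (by simp)]

lemma nE0 (c u : Vtx 2) (K : Plaq 2 → ℕ) :
    nEdge (Pp c).edges K (u, u + E0)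
      = (if u = c + E1 then 1 else 0) + (K (Pn u) + K (Pp (u - E1))) := by
  have hset : {q : Plaq 2 | (u, u + E0) ∈ q.edges} = {Pn u, Pp (u - E1)} := by
    ext q; simp [mem_edges_E0]
  rw [nEdge, count3, hset, finsum_mem_pair (by simp)]

lemma nE0' (c u : Vtx 2) (K : Plaq 2 → ℕ) :
    nEdge (Pp c).edges K (u + E0, u)
      = (if u = c then 1 else 0) + (K (Pp u) + K (Pn (u - E1))) := by
  have hset : {q : Plaq 2 | (u + E0, u) ∈ q.edges} = {Pp u, Pn (u - E1)} := by
    ext q; simp [mem_edges_E0']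
  rw [nEdge, count4, hset, finsum_mem_pair (by simp)]

end Stmt13

namespace Stmt13

lemma sum_ind (n : ℕ) (a : ℤ) :
    (∑ t ∈ Finset.range n, if (t : ℤ) = a then (1:ℤ) else 0)
      = if 0 ≤ a ∧ a < n then 1 else 0 := by
  induction n with
  | zero => simp
  | succ n ih =>
    rw [Finset.sum_range_succ, ih]
    push_cast
    split_ifs <;> omega

lemma coordsub (x : Vtx 2) (t : ℕ) (i : Fin 2) :
    (x - t • (E0 : Vtx 2)) i = x i - t * E0 i := by
  simp [Pi.smul_apply, nsmul_eq_mul]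

lemma sub_smul_inj (x : Vtx 2) : Function.Injective (fun t : ℕ => x - t • (E0 : Vtx 2)) := by
  intro m n h
  have := congrFun h 0
  simp only [coordsub, e00] at this
  omega

end Stmt13

namespace Stmt13

lemma key_balance (K : Plaq 2 → ℕ) (c : Vtx 2) (hfin : (Function.support K).Finite)
    (hbal : ∀ u : Vtx 2,
      (if u = c then 1 else 0) + (K (Pp u) + K (Pn (u - E0)))
        = (if u = c + E0 then 1 else 0) + (K (Pn u) + K (Pp (u - E0)))) :
    ∀ x : Vtx 2, K (Pn x) = K (Pp x) + (if x = c then 1 else 0) := by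
  classical
  set D : Vtx 2 → ℤ := fun x => (K (Pn x) : ℤ) - K (Pp x) with hD
  set ι : Vtx 2 → ℤ := fun u => (if u = c then (1:ℤ) else 0) - (if u = c + E0 then 1 else 0)
    with hι
  have step : ∀ u, D u = D (u - E0) + ι u := by
    intro u
    have h := hbal u
    simp only [hD, hι]
    split_ifs at h ⊢ <;> push_cast <;> omega
  have tele : ∀ n : ℕ, ∀ x : Vtx 2,
      D x = D (x - n • (E0 : Vtx 2)) + ∑ t ∈ Finset.range n, ι (x - t • (E0 : Vtx 2)) := by
    intro n
    induction n with
    | zero => intro x; simp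
    | succ n ih =>
      intro x
      rw [Finset.sum_range_succ, ih x, step (x - n • (E0 : Vtx 2)),
        show x - n • (E0 : Vtx 2) - E0 = x - (n+1) • (E0 : Vtx 2) by
          rw [succ_nsmul, sub_sub]]
      ring
  have hDsupp : (Function.support D).Finite := by
    apply Set.Finite.subset (hfin.image Plaq.corner)
    intro x hx
    simp only [Function.mem_support, hD] at hx
    have h : K (Pn x) ≠ 0 ∨ K (Pp x) ≠ 0 := by
      by_contra h; push_neg at h; simp [h.1, h.2] at hx
    rcases h with h | h
    · exact ⟨Pn x, h, rfl⟩
    · exact ⟨Pp x, h, rfl⟩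
  intro x
  have hBad : {n : ℕ | x - n • (E0 : Vtx 2) ∈ Function.support D}.Finite :=
    Set.Finite.preimage (sub_smul_inj x).injOn hDsupp
  obtain ⟨m, hm⟩ := hBad.bddAbove
  set n : ℕ := max (m + 1) ((x 0 - c 0).toNat + 2) with hn
  have hD0 : D (x - n • (E0 : Vtx 2)) = 0 := by
    by_contra h
    have : n ≤ m := hm h
    omega
  have hDx := tele n x
  rw [hD0, zero_add] at hDx
  by_cases hx1 : x 1 = c 1
  · have hterm : ∀ t ∈ Finset.range n, ι (x - t • (E0 : Vtx 2))
        = (if (t:ℤ) = x 0 - c 0 then (1:ℤ) else 0)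
          - (if (t:ℤ) = x 0 - c 0 - 1 then 1 else 0) := by
      intro t _
      simp only [hι]
      have i1 : (x - t • (E0 : Vtx 2) = c) ↔ ((t:ℤ) = x 0 - c 0) := by
        rw [vec_ext]; simp only [coordsub, e00, e01]
        constructor
        · rintro ⟨h0, h1⟩; omega
        · intro h; omega
      have i2 : (x - t • (E0 : Vtx 2) = c + E0) ↔ ((t:ℤ) = x 0 - c 0 - 1) := by
        rw [vec_ext]; simp only [coordsub, Pi.add_apply, e00, e01]
        constructor
        · rintro ⟨h0, h1⟩; omega
        · intro h; omega
      rw [if_congr i1 rfl rfl, if_congr i2 rfl rfl]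
    rw [Finset.sum_congr rfl hterm, Finset.sum_sub_distrib, sum_ind, sum_ind] at hDx
    have hxc : (x = c) ↔ x 0 = c 0 := by
      rw [vec_ext]
      constructor
      · rintro ⟨h0, _⟩; exact h0
      · intro h; exact ⟨h, hx1⟩
    have hnx : x 0 - c 0 < (n : ℤ) := by
      have : (x 0 - c 0).toNat + 2 ≤ n := le_max_right _ _
      omega
    simp only [hxc]
    simp only [hD] at hDx
    split_ifs at hDx ⊢ <;> omega
  · have hterm : ∀ t ∈ Finset.range n, ι (x - t • (E0 : Vtx 2)) = 0 := by
      intro t _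
      simp only [hι]
      rw [if_neg, if_neg, sub_zero]
      · intro h
        have := congrFun h 1
        simp only [coordsub, Pi.add_apply, e01] at this
        omega
      · intro h
        have := congrFun h 1
        simp only [coordsub, e01] at this
        omega
    rw [Finset.sum_eq_zero hterm] at hDx
    have hxc : x ≠ c := by
      intro h; exact hx1 (by rw [h])
    rw [if_neg hxc]
    simp only [hD] at hDx
    omega

end Stmt13

namespace Stmt13
lemma Pp_injective : Function.Injective Pp := fun _ _ h => Pp_inj.mp h
lemma Pn_injective : Function.Injective Pn := fun _ _ h => Pn_inj.mp h
lemma parea_split (K : Plaq 2 → ℕ) (hfin : (Function.support K).Finite) :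
    parea K = (∑ᶠ x : Vtx 2, K (Pp x)) + (∑ᶠ x : Vtx 2, K (Pn x)) := by
  have huniv : (Set.univ : Set (Plaq 2)) = Set.range Pp ∪ Set.range Pn := by
    ext q
    simp only [Set.mem_univ, true_iff, Set.mem_union, Set.mem_range]
    rcases plaq_cases q with h | h
    · exact Or.inl ⟨q.corner, h.symm⟩
    · exact Or.inr ⟨q.corner, h.symm⟩
  have hdisj : Disjoint (Set.range Pp) (Set.range Pn) := by
    rw [Set.disjoint_iff]
    rintro q ⟨⟨x, rfl⟩, ⟨y, hy⟩⟩
    exact absurd hy.symm Pp_ne_Pn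
  rw [parea, ← finsum_mem_univ, huniv,
    finsum_mem_union' hdisj (hfin.inter_of_right _) (hfin.inter_of_right _),
    finsum_mem_range Pp_injective, finsum_mem_range Pn_injective]

lemma nat_finsum_eq_one {α : Type*} (f : α → ℕ) (hf : (Function.support f).Finite)
    (h : ∑ᶠ a, f a = 1) : ∃ a, f a = 1 ∧ ∀ b, b ≠ a → f b = 0 := by
  classical
  rw [finsum_eq_sum f hf] at h
  have hex : ∃ a ∈ hf.toFinset, f a ≠ 0 := by
    by_contra hc
    push_neg at hc
    rw [Finset.sum_eq_zero hc] at h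
    omega
  obtain ⟨a, ha, hfa⟩ := hex
  rw [← Finset.add_sum_erase _ f ha] at h
  have h0 : ∑ x ∈ hf.toFinset.erase a, f x = 0 := by omega
  refine ⟨a, by omega, fun b hb => ?_⟩
  by_cases hbm : b ∈ hf.toFinset
  · exact Finset.sum_eq_zero_iff.mp h0 b (Finset.mem_erase.mpr ⟨hb, hbm⟩)
  · simpa using (Set.Finite.mem_toFinset hf).not.mp hbm

end Stmt13

namespace Stmt13

lemma nzero (c : Vtx 2) (K : Plaq 2 → ℕ) (e : Edge 2)
    (h : ¬(e.2 = e.1 + E0 ∨ e.2 = e.1 + E1 ∨ e.1 = e.2 + E0 ∨ e.1 = e.2 + E1)) :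
    nEdge (Pp c).edges K e = 0 := by
  have hset : {q : Plaq 2 | e ∈ q.edges} = ∅ := by
    ext q
    simp only [Set.mem_setOf_eq, Set.mem_empty_iff_false, iff_false]
    intro hm
    exact h (mem_edges_lattice hm)
  have hcount : ((Pp c).edges.filter fun x => x = e) = [] := by
    rw [List.filter_eq_nil_iff]
    intro a ha
    simp only [decide_eq_true_eq]
    rintro rfl
    exact h (mem_edges_lattice ha)
  rw [nEdge, hcount, hset, finsum_mem_empty]
  rfl

lemma balanced_of (K : Plaq 2 → ℕ) (c : Vtx 2)
    (hB : ∀ x, K (Pn x) = K (Pp x) + (if x = c then 1 else 0)) :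
    BalancedPair (Pp c).edges K := by
  have fwd1 : ∀ u : Vtx 2,
      nEdge (Pp c).edges K (u, u + E1) = nEdge (Pp c).edges K (u + E1, u) := by
    intro u
    rw [nE1, nE1', hB u, hB (u - E0)]
    simp only [sub_eq_iff_eq_add]
    split_ifs <;> omega
  have fwd0 : ∀ u : Vtx 2,
      nEdge (Pp c).edges K (u, u + E0) = nEdge (Pp c).edges K (u + E0, u) := by
    intro u
    rw [nE0, nE0', hB u, hB (u - E1)]
    simp only [sub_eq_iff_eq_add]
    split_ifs <;> omega
  intro e
  have herev : erev e = (e.2, e.1) := rfl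
  by_cases h0 : e.2 = e.1 + E0
  · have he : e = (e.1, e.1 + E0) := by rw [← h0]
    rw [he]; exact fwd0 e.1
  by_cases h1 : e.2 = e.1 + E1
  · have he : e = (e.1, e.1 + E1) := by rw [← h1]
    rw [he]; exact fwd1 e.1
  by_cases h0' : e.1 = e.2 + E0
  · have he : e = (e.2 + E0, e.2) := by rw [← h0']
    rw [he]; exact (fwd0 e.2).symm
  by_cases h1' : e.1 = e.2 + E1
  · have he : e = (e.2 + E1, e.2) := by rw [← h1']
    rw [he]; exact (fwd1 e.2).symm
  · rw [nzero c K e (by tauto), nzero c K (erev e)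
      (by rw [herev]; simpa using by tauto)]

end Stmt13

namespace Stmt13

lemma sharesEdge_symm {P Q : Plaq 2} (h : SharesEdge P Q) : SharesEdge Q P := by
  obtain ⟨e, he, h | h⟩ := h
  · exact ⟨e, h, Or.inl he⟩
  · exact ⟨erev e, h, Or.inr he⟩

lemma rtg_step {α : Type*} {R : α → α → Prop} {x y : α}
    (h : Relation.ReflTransGen R x y) (hne : x ≠ y) : ∃ a b, R a b ∧ a ≠ b := by
  induction h with
  | refl => exact absurd rfl hne
  | @tail b c hab hbc ih =>
    by_cases hxb : x = b
    · subst hxb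
      exact ⟨x, c, hbc, hne⟩
    · exact ih hxb

lemma shares_iff (y c : Vtx 2) :
    SharesEdge (Pp y) (Pp c) ↔
      (y = c ∨ y = c + E0 ∨ y = c - E0 ∨ y = c + E1 ∨ y = c - E1) := by
  constructor
  · rintro ⟨e, he, hmem⟩
    have he' : e = (y, y + E1) ∨ e = (y + E1, y + E1 + E0)
        ∨ e = (y + E1 + E0, y + E0) ∨ e = (y + E0, y) := by
      simpa [Plaq.edges, Pp] using he
    rcases he' with rfl | rfl | rfl | rfl
    · rcases hmem with h | h
      · rw [mem_edges_E1] at h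
        rcases h with h | h
        · left; exact (Pp_inj.mp h).symm
        · exact absurd h Pp_ne_Pn
      · rw [show erev (y, y + E1) = (y + E1, y) from rfl, mem_edges_E1'] at h
        rcases h with h | h
        · exact absurd h Pp_ne_Pn
        · right; left
          have := Pp_inj.mp h
          rw [vec_ext] at this ⊢
          simp only [Pi.add_apply, Pi.sub_apply, e00, e01] at this ⊢
          omega
    · rcases hmem with h | h
      · rw [mem_edges_E0] at h
        rcases h with h | h
        · exact absurd h Pp_ne_Pn
        · left
          have := Pp_inj.mp h
          rw [vec_ext] at this ⊢
          simp only [Pi.add_apply, Pi.sub_apply, e00, e01, e10, e11] at this ⊢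
          omega
      · rw [show erev (y + E1, y + E1 + E0) = (y + E1 + E0, y + E1) from rfl,
          mem_edges_E0'] at h
        rcases h with h | h
        · right; right; right; right
          have := Pp_inj.mp h
          rw [vec_ext] at this ⊢
          simp only [Pi.add_apply, Pi.sub_apply, e00, e01, e10, e11] at this ⊢
          omega
        · exact absurd h Pp_ne_Pn
    · have hre : (y + E1 + E0, y + E0) = ((y + E0) + E1, y + E0) := by
        rw [Prod.mk.injEq]
        constructor
        · rw [vec_ext]; simp [Pi.add_apply]
        · rfl
      rw [hre] at hmem
      rcases hmem with h | h
      · rw [mem_edges_E1'] at h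
        rcases h with h | h
        · exact absurd h Pp_ne_Pn
        · left
          have := Pp_inj.mp h
          rw [vec_ext] at this ⊢
          simp only [Pi.add_apply, Pi.sub_apply, e00, e01, e10, e11] at this ⊢
          omega
      · rw [show erev ((y + E0) + E1, y + E0) = (y + E0, (y + E0) + E1) from rfl,
          mem_edges_E1] at h
        rcases h with h | h
        · right; right; left
          have := Pp_inj.mp h
          rw [vec_ext] at this ⊢
          simp only [Pi.add_apply, Pi.sub_apply, e00, e01, e10, e11] at this ⊢
          omega
        · exact absurd h Pp_ne_Pn
    · rcases hmem with h | h
      · rw [mem_edges_E0'] at h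
        rcases h with h | h
        · left; exact (Pp_inj.mp h).symm
        · exact absurd h Pp_ne_Pn
      · rw [show erev (y + E0, y) = (y, y + E0) from rfl, mem_edges_E0] at h
        rcases h with h | h
        · exact absurd h Pp_ne_Pn
        · right; right; right; left
          have := Pp_inj.mp h
          rw [vec_ext] at this ⊢
          simp only [Pi.add_apply, Pi.sub_apply, e00, e01, e10, e11] at this ⊢
          omega
  · intro h
    have mem1 : ((y, y + E1) : Edge 2) ∈ (Pp y).edges := by simp [Plaq.edges, Pp]
    have mem3 : ((y + E1 + E0, y + E0) : Edge 2) ∈ (Pp y).edges := by simp [Plaq.edges, Pp]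
    have mem2 : ((y + E1, y + E1 + E0) : Edge 2) ∈ (Pp y).edges := by simp [Plaq.edges, Pp]
    have mem4 : ((y + E0, y) : Edge 2) ∈ (Pp y).edges := by simp [Plaq.edges, Pp]
    rcases h with rfl | h | h | h | h
    · exact ⟨_, mem1, Or.inl mem1⟩
    · refine ⟨_, mem1, Or.inr ?_⟩
      rw [show erev (y, y + E1) = (y + E1, y) from rfl, mem_edges_E1']
      right
      rw [Pp_inj, h, vec_ext]
      simp only [Pi.add_apply, Pi.sub_apply, e00, e01]
      omega
    · refine ⟨_, mem3, Or.inr ?_⟩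
      have hre : erev ((y + E1 + E0, y + E0) : Edge 2) = (y + E0, (y + E0) + E1) := by
        rw [erev, Prod.mk.injEq]
        refine ⟨rfl, ?_⟩
        rw [vec_ext]; simp [Pi.add_apply]
      rw [hre, mem_edges_E1]
      left
      rw [Pp_inj, h, vec_ext]
      simp only [Pi.add_apply, Pi.sub_apply, e00, e01]
      omega
    · refine ⟨_, mem4, Or.inr ?_⟩
      rw [show erev (y + E0, y) = (y, y + E0) from rfl, mem_edges_E0]
      right
      rw [Pp_inj, h, vec_ext]
      simp only [Pi.add_apply, Pi.sub_apply, e00, e01, e10, e11]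
      omega
    · refine ⟨_, mem2, Or.inr ?_⟩
      rw [show erev (y + E1, y + E1 + E0) = ((y + E1) + E0, y + E1) from rfl, mem_edges_E0']
      left
      rw [Pp_inj, h, vec_ext]
      simp only [Pi.add_apply, Pi.sub_apply, e00, e01, e10, e11]
      omega

lemma nbhd (c : Vtx 2) :
    {r : Plaq 2 | r.posOriented ∧ r ≠ Pp c ∧ SharesEdge r (Pp c)}
      = {Pp (c + E0), Pp (c - E0), Pp (c + E1), Pp (c - E1)} := by
  ext q
  simp only [Set.mem_setOf_eq, Set.mem_insert_iff, Set.mem_singleton_iff]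
  constructor
  · rintro ⟨hpos, hne, hsh⟩
    rw [pos_eq_Pp hpos] at hsh hne ⊢
    rw [shares_iff] at hsh
    rcases hsh with h | h | h | h | h
    · exact absurd (by rw [h]) hne
    · left; rw [h]
    · right; left; rw [h]
    · right; right; left; rw [h]
    · right; right; right; rw [h]
  · have hne : ∀ z : Vtx 2, z ≠ c → Pp z ≠ Pp c := by
      intro z hz h; exact hz (Pp_inj.mp h)
    have d1 : c + E0 ≠ c := by
      intro h; have := congrFun h 0; simp [Pi.add_apply] at this
    have d2 : c - E0 ≠ c := by
      intro h; have := congrFun h 0; simp [Pi.sub_apply] at this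
    have d3 : c + E1 ≠ c := by
      intro h; have := congrFun h 1; simp [Pi.add_apply] at this
    have d4 : c - E1 ≠ c := by
      intro h; have := congrFun h 1; simp [Pi.sub_apply] at this
    rintro (rfl | rfl | rfl | rfl)
    · exact ⟨Pp_pos _, hne _ d1, (shares_iff _ _).mpr (Or.inr (Or.inl rfl))⟩
    · exact ⟨Pp_pos _, hne _ d2, (shares_iff _ _).mpr (Or.inr (Or.inr (Or.inl rfl)))⟩
    · exact ⟨Pp_pos _, hne _ d3, (shares_iff _ _).mpr (Or.inr (Or.inr (Or.inr (Or.inl rfl))))⟩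
    · exact ⟨Pp_pos _, hne _ d4, (shares_iff _ _).mpr (Or.inr (Or.inr (Or.inr (Or.inr rfl))))⟩

end Stmt13

namespace Stmt13

def K0 (c : Vtx 2) : Plaq 2 → ℕ := fun q => if q = Pp c then 1 else if q = Pn c then 2 else 0

def KR (c y : Vtx 2) : Plaq 2 → ℕ := fun q =>
  (if q = Pn c then 1 else 0) + (if q = Pp y then 1 else 0) + (if q = Pn y then 1 else 0)

lemma K0_Pp (c x : Vtx 2) : K0 c (Pp x) = if x = c then 1 else 0 := by
  simp [K0, Pp_inj]

lemma K0_Pn (c x : Vtx 2) : K0 c (Pn x) = if x = c then 2 else 0 := by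
  simp [K0, Pn_inj]

lemma KR_Pp (c y x : Vtx 2) : KR c y (Pp x) = if x = y then 1 else 0 := by
  simp [KR, Pp_inj]

lemma KR_Pn (c y x : Vtx 2) :
    KR c y (Pn x) = (if x = y then 1 else 0) + (if x = c then 1 else 0) := by
  simp [KR, Pn_inj]
  split_ifs <;> omega

lemma supp_ite_fin (c : Vtx 2) (k : ℕ) :
    (Function.support (fun x : Vtx 2 => if x = c then k else 0)).Finite := by
  apply Set.Finite.subset (Set.finite_singleton c)
  intro x hx
  simp only [Function.mem_support] at hx
  by_contra h
  simp only [Set.mem_singleton_iff] at h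
  simp [h] at hx

lemma finsum_ite (c : Vtx 2) (k : ℕ) :
    (∑ᶠ x : Vtx 2, if x = c then k else 0) = k := by
  rw [finsum_eq_single _ c (fun x hx => by simp [hx])]
  simp

lemma psupp_K0 (c : Vtx 2) : psupp (K0 c) = {Pp c} := by
  ext q
  simp only [psupp, Set.mem_setOf_eq, Set.mem_singleton_iff]
  constructor
  · rintro ⟨hpos, hne⟩
    rw [pos_eq_Pp hpos] at hne ⊢
    rw [Pp_rev, K0_Pp, K0_Pn] at hne
    rw [Pp_inj]
    rcases hne with h | h <;>
    · by_contra hc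
      simp [hc] at h
  · rintro rfl
    refine ⟨Pp_pos c, Or.inl ?_⟩
    simp [K0_Pp]

lemma K0_mem (c : Vtx 2) :
    (Function.support (K0 c)).Finite ∧ PAConnected (K0 c) ∧ parea (K0 c) = 3 ∧
      BalancedPair (Pp c).edges (K0 c) := by
  have hfin : (Function.support (K0 c)).Finite := by
    apply Set.Finite.subset ((Set.finite_singleton (Pp c)).insert (Pn c))
    intro q hq
    simp only [Function.mem_support] at hq
    by_contra h
    simp only [Set.mem_insert_iff, Set.mem_singleton_iff, not_or] at h
    simp [K0, h.1, h.2] at hq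
  refine ⟨hfin, ?_, ?_, ?_⟩
  · intro a ha b hb
    rw [psupp_K0, Set.mem_singleton_iff] at ha hb
    rw [ha, hb]
  · rw [parea_split _ hfin]
    have h1 : (fun x => K0 c (Pp x)) = fun x => if x = c then 1 else 0 :=
      funext fun x => K0_Pp c x
    have h2 : (fun x => K0 c (Pn x)) = fun x => if x = c then 2 else 0 :=
      funext fun x => K0_Pn c x
    rw [h1, h2, finsum_ite, finsum_ite]
  · apply balanced_of
    intro x
    rw [K0_Pp, K0_Pn]
    split_ifs <;> omega

lemma psupp_KR (c y : Vtx 2) (hy : y ≠ c) : psupp (KR c y) = {Pp c, Pp y} := by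
  ext q
  simp only [psupp, Set.mem_setOf_eq, Set.mem_insert_iff, Set.mem_singleton_iff]
  constructor
  · rintro ⟨hpos, hne⟩
    rw [pos_eq_Pp hpos] at hne ⊢
    rw [Pp_rev, KR_Pp, KR_Pn] at hne
    rw [Pp_inj, Pp_inj]
    by_contra hc
    push_neg at hc
    simp [hc.1, hc.2] at hne
  · rintro (rfl | rfl)
    · refine ⟨Pp_pos c, Or.inr ?_⟩
      rw [Pp_rev, KR_Pn]
      simp
    · refine ⟨Pp_pos y, Or.inl ?_⟩
      rw [KR_Pp]
      simp

lemma KR_mem (c y : Vtx 2) (hy : y ≠ c) (hsh : SharesEdge (Pp y) (Pp c)) :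
    (Function.support (KR c y)).Finite ∧ PAConnected (KR c y) ∧ parea (KR c y) = 3 ∧
      BalancedPair (Pp c).edges (KR c y) := by
  have hfin : (Function.support (KR c y)).Finite := by
    apply Set.Finite.subset (((Set.finite_singleton (Pn y)).insert (Pp y)).insert (Pn c))
    intro q hq
    simp only [Function.mem_support] at hq
    by_contra h
    simp only [Set.mem_insert_iff, Set.mem_singleton_iff, not_or] at h
    simp [KR, h.1, h.2.1, h.2.2] at hq
  have hps := psupp_KR c y hy
  have hmc : Pp c ∈ psupp (KR c y) := by rw [hps]; exact Set.mem_insert _ _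
  have hmy : Pp y ∈ psupp (KR c y) := by
    rw [hps]; exact Set.mem_insert_of_mem _ rfl
  refine ⟨hfin, ?_, ?_, ?_⟩
  · intro a ha b hb
    rw [hps] at ha hb
    rcases ha with rfl | rfl <;> rcases hb with rfl | rfl
    · exact Relation.ReflTransGen.refl
    · exact Relation.ReflTransGen.single ⟨hmc, hmy, sharesEdge_symm hsh⟩
    · exact Relation.ReflTransGen.single ⟨hmy, hmc, hsh⟩
    · exact Relation.ReflTransGen.refl
  · rw [parea_split _ hfin]
    have h1 : (fun x => KR c y (Pp x)) = fun x => if x = y then 1 else 0 :=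
      funext fun x => KR_Pp c y x
    have h2 : (fun x => KR c y (Pn x))
        = fun x => (if x = y then 1 else 0) + (if x = c then 1 else 0) :=
      funext fun x => KR_Pn c y x
    rw [h1, h2, finsum_ite, finsum_add_distrib (supp_ite_fin y 1) (supp_ite_fin c 1),
      finsum_ite, finsum_ite]
    rfl
  · apply balanced_of
    intro x
    rw [KR_Pp, KR_Pn]

end Stmt13

namespace Stmt13

lemma classify (c : Vtx 2) (K : Plaq 2 → ℕ) (hfin : (Function.support K).Finite)
    (hconn : PAConnected K) (har : parea K = 3)
    (hbal : BalancedPair (Pp c).edges K) :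
    K = K0 c ∨ ∃ y, y ≠ c ∧ SharesEdge (Pp y) (Pp c) ∧ K = KR c y := by
  have hb : ∀ u : Vtx 2,
      (if u = c then 1 else 0) + (K (Pp u) + K (Pn (u - E0)))
        = (if u = c + E0 then 1 else 0) + (K (Pn u) + K (Pp (u - E0))) := by
    intro u
    have h := hbal (u, u + E1)
    rwa [nE1, show erev ((u, u + E1) : Edge 2) = (u + E1, u) from rfl, nE1'] at h
  have hB := key_balance K c hfin hb
  have hAfin : (Function.support fun x => K (Pp x)).Finite :=
    Set.Finite.preimage Pp_injective.injOn hfin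
  have hsum : (∑ᶠ x : Vtx 2, K (Pp x)) = 1 := by
    have hps := parea_split K hfin
    rw [har] at hps
    have hT : (∑ᶠ x : Vtx 2, K (Pn x)) = (∑ᶠ x : Vtx 2, K (Pp x)) + 1 := by
      have hfun : (fun x => K (Pn x)) = fun x => K (Pp x) + (if x = c then 1 else 0) :=
        funext hB
      rw [hfun, finsum_add_distrib hAfin (supp_ite_fin c 1), finsum_ite]
    omega
  obtain ⟨x₀, h1, h0⟩ := nat_finsum_eq_one _ hAfin hsum
  have hA : ∀ x, K (Pp x) = if x = x₀ then 1 else 0 := by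
    intro x
    by_cases h : x = x₀
    · subst h; simp [h1]
    · simp [h, h0 x h]
  have hN : ∀ x, K (Pn x) = (if x = x₀ then 1 else 0) + (if x = c then 1 else 0) := by
    intro x; rw [hB, hA]
  by_cases hx : x₀ = c
  · left
    subst hx
    funext q
    rcases plaq_cases q with h | h <;> rw [h]
    · rw [hA, K0_Pp]
    · rw [hN, K0_Pn]
      split_ifs <;> rfl
  · right
    have hpsupp : psupp K = {Pp c, Pp x₀} := by
      ext q
      simp only [psupp, Set.mem_setOf_eq, Set.mem_insert_iff, Set.mem_singleton_iff]
      constructor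
      · rintro ⟨hpos, hne⟩
        rw [pos_eq_Pp hpos] at hne ⊢
        rw [Pp_rev, hA, hN] at hne
        simp only [Pp_inj]
        by_contra hcon
        push_neg at hcon
        simp [hcon.1, hcon.2] at hne
      · rintro (rfl | rfl)
        · exact ⟨Pp_pos c, Or.inr (by rw [Pp_rev, hN]; simp)⟩
        · exact ⟨Pp_pos x₀, Or.inl (by rw [hA]; simp)⟩
    have hmc : Pp c ∈ psupp K := by rw [hpsupp]; exact Set.mem_insert _ _
    have hmx : Pp x₀ ∈ psupp K := by rw [hpsupp]; exact Set.mem_insert_of_mem _ rfl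
    have hrtg := hconn (Pp x₀) hmx (Pp c) hmc
    have hnex : Pp x₀ ≠ Pp c := fun h => hx (Pp_inj.mp h)
    obtain ⟨a, b, ⟨ha, hb2, hsh⟩, hab⟩ := rtg_step hrtg hnex
    rw [hpsupp] at ha hb2
    have hshare : SharesEdge (Pp x₀) (Pp c) := by
      rcases ha with rfl | rfl <;> rcases hb2 with rfl | rfl
      · exact absurd rfl hab
      · exact sharesEdge_symm hsh
      · exact hsh
      · exact absurd rfl hab
    refine ⟨x₀, hx, hshare, ?_⟩
    funext q
    rcases plaq_cases q with h | h <;> rw [h]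
    · rw [hA, KR_Pp]
    · rw [hN, KR_Pn]

lemma ncard4 (c : Vtx 2) :
    ({Pp (c + E0), Pp (c - E0), Pp (c + E1), Pp (c - E1)} : Set (Plaq 2)).ncard = 4 := by
  have hco0 : ∀ z w : Vtx 2, z 0 ≠ w 0 → Pp z ≠ Pp w :=
    fun z w h heq => h (congrFun (Pp_inj.mp heq) 0)
  have hco1 : ∀ z w : Vtx 2, z 1 ≠ w 1 → Pp z ≠ Pp w :=
    fun z w h heq => h (congrFun (Pp_inj.mp heq) 1)
  have n1 : Pp (c + E0) ≠ Pp (c - E0) := hco0 _ _ (by simp <;> omega)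
  have n2 : Pp (c + E0) ≠ Pp (c + E1) := hco0 _ _ (by simp <;> omega)
  have n3 : Pp (c + E0) ≠ Pp (c - E1) := hco0 _ _ (by simp <;> omega)
  have n4 : Pp (c - E0) ≠ Pp (c + E1) := hco0 _ _ (by simp <;> omega)
  have n5 : Pp (c - E0) ≠ Pp (c - E1) := hco0 _ _ (by simp <;> omega)
  have n6 : Pp (c + E1) ≠ Pp (c - E1) := hco1 _ _ (by simp <;> omega)
  rw [Set.ncard_insert_of_notMem (by simp [n1, n2, n3]),
    Set.ncard_insert_of_notMem (by simp [n4, n5]),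
    Set.ncard_insert_of_notMem (by simp [n6]),
    Set.ncard_singleton]

end Stmt13


open Stmt13 in
/-- In `ℤ²`, for a positively oriented plaquette `p`, the connected plaquette assignments
`K` of area `3` with `(p, K)` balanced are exactly the five assignments:
`K₀` with `K₀ p = 1`, `K₀ p⁻¹ = 2`, and, for each of the four positively oriented
plaquettes `r ≠ p` sharing an (unoriented) edge with `p`, the assignment
`K_r` with `K_r p⁻¹ = K_r r = K_r r⁻¹ = 1`. -/
theorem stmt13 (p : Plaq 2) (hp : p.posOriented) :
    ({K : Plaq 2 → ℕ | (Function.support K).Finite ∧ PAConnected K ∧ parea K = 3 ∧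
        BalancedPair p.edges K}
      = insert (fun q => if q = p then 1 else if q = p.rev then 2 else 0)
          ((fun r => (fun q => (if q = p.rev then 1 else 0) + (if q = r then 1 else 0) +
              (if q = r.rev then 1 else 0))) ''
            {r : Plaq 2 | r.posOriented ∧ r ≠ p ∧ SharesEdge r p})) ∧
    Nat.card {r : Plaq 2 | r.posOriented ∧ r ≠ p ∧ SharesEdge r p} = 4 ∧
    Nat.card {K : Plaq 2 → ℕ | (Function.support K).Finite ∧ PAConnected K ∧ parea K = 3 ∧
        BalancedPair p.edges K} = 5 := by
  obtain ⟨c, d1, d2, hd⟩ := p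
  have hlt : d2 < d1 := hp
  have hd1 : d1 = 1 := by
    have h2 := d1.isLt
    rw [Fin.ext_iff]
    rw [Fin.lt_def] at hlt
    omega
  have hd2 : d2 = 0 := by
    have h2 := d1.isLt
    rw [Fin.ext_iff]
    rw [Fin.lt_def] at hlt
    omega
  subst hd1; subst hd2
  have hpc : (⟨c, 1, 0, hd⟩ : Plaq 2) = Pp c := rfl
  rw [hpc]
  -- the main set equality
  have hEQ : {K : Plaq 2 → ℕ | (Function.support K).Finite ∧ PAConnected K ∧ parea K = 3 ∧
        BalancedPair (Pp c).edges K}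
      = insert (fun q => if q = Pp c then 1 else if q = (Pp c).rev then 2 else 0)
          ((fun r => (fun q => (if q = (Pp c).rev then 1 else 0) + (if q = r then 1 else 0) +
              (if q = r.rev then 1 else 0))) ''
            {r : Plaq 2 | r.posOriented ∧ r ≠ Pp c ∧ SharesEdge r (Pp c)}) := by
    ext K
    simp only [Set.mem_setOf_eq, Set.mem_insert_iff, Set.mem_image]
    constructor
    · rintro ⟨hfin, hconn, har, hbal⟩
      rcases classify c K hfin hconn har hbal with h | ⟨y, hy, hsh, h⟩
      · left; rw [h]; rfl
      · right
        refine ⟨Pp y, ⟨Pp_pos y, fun hq => hy (Pp_inj.mp hq), hsh⟩, ?_⟩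
        rw [h]; rfl
    · rintro (rfl | ⟨r, ⟨hpos, hne, hsh⟩, rfl⟩)
      · exact K0_mem c
      · have hr : r = Pp r.corner := pos_eq_Pp hpos
        have hy : r.corner ≠ c := fun h => hne (by rw [hr, h])
        have hsh' : SharesEdge (Pp r.corner) (Pp c) := by rw [← hr]; exact hsh
        rw [hr]
        exact KR_mem c r.corner hy hsh'
  refine ⟨hEQ, ?_, ?_⟩
  · rw [nbhd c, Nat.card_coe_set_eq, ncard4]
  · rw [hEQ, nbhd c, Nat.card_coe_set_eq]
    have hco0 : ∀ z w : Vtx 2, z 0 ≠ w 0 → z ≠ w := fun z w h heq => h (congrFun heq 0)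
    have hy1 : c + E0 ≠ c := hco0 _ _ (by simp)
    have hy2 : c - E0 ≠ c := hco0 _ _ (by simp)
    have hy3 : c + E1 ≠ c := fun h => by have := congrFun h 1; simp at this
    have hy4 : c - E1 ≠ c := fun h => by have := congrFun h 1; simp at this
    have hval : ∀ y : Vtx 2,
        (fun q => (if q = (Pp c).rev then 1 else 0) + (if q = Pp y then 1 else 0) +
          (if q = (Pp y).rev then 1 else 0)) = KR c y := by
      intro y; rfl
    have hK0 : (fun q => if q = Pp c then 1 else if q = (Pp c).rev then 2 else 0) = K0 c := rfl
    have hKRinj : ∀ y1 y2 : Vtx 2, KR c y1 = KR c y2 → y1 = y2 := by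
      intro y1 y2 h
      have h2 := congrFun h (Pp y1)
      rw [KR_Pp, KR_Pp] at h2
      by_contra hne
      rw [if_pos rfl, if_neg hne] at h2
      exact one_ne_zero h2
    have hinj : Set.InjOn
        (fun r => (fun q => (if q = (Pp c).rev then 1 else 0) + (if q = r then 1 else 0) +
          (if q = r.rev then 1 else 0)))
        {Pp (c + E0), Pp (c - E0), Pp (c + E1), Pp (c - E1)} := by
      rintro r1 h1 r2 h2 heq
      have e1 : r1 = Pp r1.corner := by
        rcases h1 with rfl | rfl | rfl | rfl <;> rfl
      have e2 : r2 = Pp r2.corner := by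
        rcases h2 with rfl | rfl | rfl | rfl <;> rfl
      rw [e1] at heq ⊢
      rw [e2] at heq ⊢
      have heq' : KR c r1.corner = KR c r2.corner := heq
      rw [hKRinj _ _ heq']
    have hK0notmem : K0 c ∉
        ((fun r => (fun q => (if q = (Pp c).rev then 1 else 0) + (if q = r then 1 else 0) +
          (if q = r.rev then 1 else 0))) ''
          {Pp (c + E0), Pp (c - E0), Pp (c + E1), Pp (c - E1)}) := by
      rintro ⟨r, hr, heq⟩
      have hyne : ∃ y : Vtx 2, y ≠ c ∧ r = Pp y := by
        rcases hr with rfl | rfl | rfl | rfl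
        · exact ⟨_, hy1, rfl⟩
        · exact ⟨_, hy2, rfl⟩
        · exact ⟨_, hy3, rfl⟩
        · exact ⟨_, hy4, rfl⟩
      obtain ⟨y, hyc, rfl⟩ := hyne
      have heq' : KR c y = K0 c := heq
      have h2 := congrFun heq' (Pp c)
      rw [KR_Pp, K0_Pp, if_pos rfl, if_neg (fun h => hyc h.symm)] at h2
      exact zero_ne_one h2
    rw [hK0]
    rw [Set.ncard_insert_of_notMem hK0notmem ((Set.toFinite _).image _),
      Set.ncard_image_of_injOn hinj, ncard4]

end
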